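/- Let G be a group, N a normal subgroup of G with G/N finite. If N has uncountable strong cofinality, then G has uncountable strong cofinality. -/

import Mathlib

open Pointwise

/-- A group has uncountable strong cofinality if every increasing exhaustion
`G = ⋃ₘ Aₘ` satisfies `Aₘᵏ = G` for some `m, k`. -/
def HasUncountableStrongCofinality (G : Type*) [Group G] : Prop :=
  ∀ A : ℕ → Set G, Monotone A → (⋃ m, A m) = Set.univ →
    ∃ m k, A m ^ k = (Set.univ : Set G)

open Set

/-!
Pull an exhaustion `A` of `G` back to `N`: uncountable strong cofinality of `N` gives a stage
`A m` with `N ⊆ A m ^ k`. A finite set of coset representatives `T` lies in a single stage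
`A m'`, and `G = T * N`, so `G = A M ^ (k + 1)` for `M = max m' m`.
-/

theorem HasUncountableStrongCofinality.exists_range_subset_pow {H G : Type*} [Group H] [Group G]
    (hH : HasUncountableStrongCofinality H) (f : H →* G) {A : ℕ → Set G} (hA : Monotone A)
    (hAG : ⋃ m, A m = univ) : ∃ m k, range f ⊆ A m ^ k := by
  obtain ⟨m, k, hmk⟩ := hH (fun m ↦ f ⁻¹' A m) (fun _ _ hij ↦ preimage_mono (hA hij))
    (by rw [← preimage_iUnion, hAG, preimage_univ])
  refine ⟨m, k, ?_⟩
  rw [← image_univ, ← hmk, image_pow]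
  exact pow_subset_pow_left (image_preimage_subset f (A m))

theorem Monotone.exists_subset_of_finite {α ι : Type*} [Preorder ι] [IsDirectedOrder ι]
    [Nonempty ι] {A : ι → Set α} (hA : Monotone A) {s : Set α}
    (hs : s.Finite) (hsA : s ⊆ ⋃ i, A i) : ∃ i, s ⊆ A i := by
  obtain ⟨i, hi⟩ := hA.directed_le.exists_mem_subset_of_finset_subset_biUnion
    (s := hs.toFinset) (by rwa [hs.coe_toFinset])
  exact ⟨i, by simpa using hi⟩

theorem uncountable_strong_cofinality_of_finite_quotient_general
    (G : Type*) [Group G] (N : Subgroup G) [Finite (G ⧸ N)]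
    (hN : HasUncountableStrongCofinality N) :
    HasUncountableStrongCofinality G := by
  intro A hA hAG
  obtain ⟨m, k, hNA⟩ := hN.exists_range_subset_pow N.subtype hA hAG
  rw [N.coe_subtype, Subtype.range_coe_subtype, SetLike.setOfPred_mem_eq] at hNA
  obtain ⟨m', hreps⟩ := hA.exists_subset_of_finite (finite_range (Quotient.out : G ⧸ N → G))
    (hAG ▸ subset_univ _)
  refine ⟨max m' m, k + 1, univ_subset_iff.1 ?_⟩
  rw [← (Subgroup.isComplement_range_left (H := N) QuotientGroup.out_eq').mul_eq, pow_succ']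
  exact mul_subset_mul (hreps.trans (hA (le_max_left _ _)))
    (hNA.trans (pow_subset_pow_left (hA (le_max_right _ _))))

/-- an extension of a finite group by a group with uncountable
strong cofinality has uncountable strong cofinality. -/
theorem uncountable_strong_cofinality_of_finite_quotient
    (G : Type*) [Group G] (N : Subgroup G) [N.Normal] [Finite (G ⧸ N)]
    (hN : HasUncountableStrongCofinality N) :
    HasUncountableStrongCofinality G :=
  uncountable_strong_cofinality_of_finite_quotient_general G N hN
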